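/- arXiv:1805.02460 — 10 statements merged into one kernel-verified Lean document; each statement's English description precedes it below -/
import Mathlib

section
/- Let a, b, c, d be real numbers with ac ≠ 0 and suppose Δ_Δ := c² − a²(cx_A + d) < 0, where x_A = −b/a and x_B = −d/c. Then the two (complex conjugate) roots x_Δ^± = x_A + (−2c ± 2i√(−Δ_Δ))/a² of Δ(z) = a²z² + (2ab+4c)z + (b²+4d) satisfy |x_Δ^± − x_B| = |x_A − x_B|, i.e. both roots lie on the circle centered at x_B with radius |x_A − x_B|. -/
/-!
Put `p = x_A - x_B`, `k = c / a²` and `t = √(-Δ_Δ) / a²`. Then `x_Δ^± - x_B = p - 2k ± 2ti`, and since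
`c x_A + d = c (x_A - x_B)` we get `t² = k (p - k)`, so that `(p - 2k)² + 4t² = p²`.
-/

open Complex

theorem norm_sub_two_mul_add_two_mul_I_eq_abs {p k t : ℝ} (ht : t ^ 2 = k * (p - k)) :
    ‖(p : ℂ) - 2 * k + 2 * t * I‖ = |p| := by
  have hsq : (p - 2 * k) ^ 2 + (2 * t) ^ 2 = p ^ 2 := by rw [mul_pow, ht]; ring
  rw [show (p : ℂ) - 2 * k + 2 * t * I = ((p - 2 * k : ℝ) : ℂ) + ((2 * t : ℝ) : ℂ) * I by
    push_cast; ring, norm_add_mul_I, hsq, Real.sqrt_sq_eq_abs]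

theorem sq_sqrt_neg_discr_div_sq {a b c d : ℝ} (ha : a ≠ 0) (hc : c ≠ 0)
    (hΔ : c ^ 2 - a ^ 2 * (c * (-b / a) + d) ≤ 0) :
    (√(-(c ^ 2 - a ^ 2 * (c * (-b / a) + d))) / a ^ 2) ^ 2
      = c / a ^ 2 * ((-b / a - -d / c) - c / a ^ 2) := by
  rw [div_pow, Real.sq_sqrt (by linarith)]
  field_simp
  ring

theorem stmt_5 (a b c d : ℝ) (h : a * c ≠ 0)
    (hneg : c ^ 2 - a ^ 2 * (c * (-b / a) + d) < 0) :
    ‖((((-b / a : ℝ)) : ℂ)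
        + (((-2 * c : ℝ) : ℂ) + 2 * Complex.I
            * ((Real.sqrt (-(c ^ 2 - a ^ 2 * (c * (-b / a) + d))) : ℝ) : ℂ)) / ((a : ℂ) ^ 2)
        - ((-d / c : ℝ) : ℂ))‖ = |(-b / a) - (-d / c)| ∧
    ‖((((-b / a : ℝ)) : ℂ)
        + (((-2 * c : ℝ) : ℂ) - 2 * Complex.I
            * ((Real.sqrt (-(c ^ 2 - a ^ 2 * (c * (-b / a) + d))) : ℝ) : ℂ)) / ((a : ℂ) ^ 2)
        - ((-d / c : ℝ) : ℂ))‖ = |(-b / a) - (-d / c)| := by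
  have ha : a ≠ 0 := left_ne_zero_of_mul h
  have hc : c ≠ 0 := right_ne_zero_of_mul h
  have haC : (a : ℂ) ≠ 0 := ofReal_ne_zero.mpr ha
  have hcC : (c : ℂ) ≠ 0 := ofReal_ne_zero.mpr hc
  have ht := sq_sqrt_neg_discr_div_sq ha hc hneg.le
  constructor
  · convert norm_sub_two_mul_add_two_mul_I_eq_abs ht using 2
    push_cast
    field_simp
    ring
  · convert norm_sub_two_mul_add_two_mul_I_eq_abs (by rw [neg_sq]; exact ht) using 2
    push_cast
    field_simp
    ring
end

section
/- Let a, b, c, d be real numbers with ac ≠ 0, x_A = −b/a, x_B = −d/c, and let z = x + iy be a non-real complex number (y ≠ 0) with A(z)·Δ(z) ≠ 0, where A(z) = az+b and Δ(z) = A(z)² + 4(cz+d). Then |A(z) + √(Δ(z))| = |A(z) − √(Δ(z))| if and only if (x − x_B)² + y² = (x_A − x_B)² and (x − x_A)(x − x_A + 2c/a²) < 0. -/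
/-!
‖A + w‖ = ‖A − w‖ says that w is orthogonal to A, i.e. that w / A is purely imaginary, i.e. that
(w / A)² = Δ / A² is a negative real. Now Δ / A² = 1 + (4c / a²) (z − x_B) / (z − x_A)², and for
non-real z the quotient (z − x_B) / (z − x_A)² is real exactly when
(z − x_A)² = 2 (x − x_A) (z − x_B); the imaginary parts of this always agree, and equality of
the real parts is the circle (x − x_B)² + y² = (x_A − x_B)². On that circle the quotient is
1 / (2 (x − x_A)), and 1 + 2c / (a² (x − x_A)) < 0 is the second condition.
-/

open ComplexConjugate
open scoped ComplexOrder

theorem one_add_div_neg_iff (t u : ℝ) : 1 + t / u < 0 ↔ u * (u + t) < 0 := by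
  rcases eq_or_ne u 0 with rfl | hu
  · simp
  · rw [show u * (u + t) = u ^ 2 * (1 + t / u) by field_simp]
    exact ⟨mul_neg_of_pos_of_neg (by positivity), (neg_of_mul_neg_right · (sq_nonneg u))⟩

namespace Complex

theorem norm_add_eq_norm_sub_iff_re_mul_conj (A w : ℂ) :
    ‖A + w‖ = ‖A - w‖ ↔ (A * conj w).re = 0 := by
  rw [← sq_eq_sq₀ (norm_nonneg _) (norm_nonneg _), Complex.sq_norm, Complex.sq_norm,
    normSq_add, normSq_sub]
  constructor <;> intro h <;> linarith

theorem re_mul_conj_eq_normSq_mul_re_div {A : ℂ} (w : ℂ) (hA : A ≠ 0) :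
    (A * conj w).re = normSq A * (w / A).re := by
  rw [← re_ofReal_mul, ← conj_re, map_mul, conj_conj, ← mul_conj]
  congr 1
  field_simp

theorem re_eq_zero_iff_sq_neg {q : ℂ} (hq : q ≠ 0) : q.re = 0 ↔ q ^ 2 < 0 :=
  sq_nonpos_iff.symm.trans (pow_ne_zero 2 hq).le_iff_lt

theorem norm_add_eq_norm_sub_iff_sq_div_sq_neg {A w : ℂ} (hA : A ≠ 0) (hw : w ≠ 0) :
    ‖A + w‖ = ‖A - w‖ ↔ w ^ 2 / A ^ 2 < 0 := by
  rw [norm_add_eq_norm_sub_iff_re_mul_conj, re_mul_conj_eq_normSq_mul_re_div w hA,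
    mul_eq_zero_iff_left (normSq_pos.2 hA).ne', re_eq_zero_iff_sq_neg (div_ne_zero hw hA), div_pow]

theorem cpow_one_div_two_sq (D : ℂ) : (D ^ ((1 : ℂ) / 2)) ^ 2 = D := by
  rw [one_div]; exact_mod_cast cpow_ofNat_inv_pow D 2

theorem norm_add_sqrt_eq_norm_sub_sqrt_iff {A D : ℂ} (hA : A ≠ 0) (hD : D ≠ 0) :
    ‖A + D ^ ((1 : ℂ) / 2)‖ = ‖A - D ^ ((1 : ℂ) / 2)‖ ↔ D / A ^ 2 < 0 := by
  have hw : D ^ ((1 : ℂ) / 2) ≠ 0 := by simp [cpow_eq_zero_iff, hD]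
  rw [norm_add_eq_norm_sub_iff_sq_div_sq_neg hA hw, cpow_one_div_two_sq]

section
variable {z : ℂ} {p q : ℝ}

theorem sq_sub_eq_two_mul_iff :
    (z - p) ^ 2 = 2 * (z.re - p) * (z - q) ↔ (z.re - q) ^ 2 + z.im ^ 2 = (p - q) ^ 2 := by
  simp only [Complex.ext_iff, sq, mul_re, mul_im, sub_re, sub_im, ofReal_re, ofReal_im,
    re_ofNat, im_ofNat]
  constructor
  · rintro ⟨h, -⟩; linarith
  · intro h; constructor <;> linarith

theorem div_sq_eq_of_sq_eq (hz : z.im ≠ 0) (h : (z - p) ^ 2 = 2 * (z.re - p) * (z - q)) :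
    (z - q) / (z - p) ^ 2 = ((2 * (z.re - p))⁻¹ : ℝ) := by
  have hq : z - q ≠ 0 := fun h => hz (by simpa using congrArg im h)
  rw [h, div_mul_cancel_right₀ hq]
  push_cast; rfl

theorem im_div_sq_eq_zero_iff (hz : z.im ≠ 0) :
    ((z - q) / (z - p) ^ 2).im = 0 ↔ (z - p) ^ 2 = 2 * (z.re - p) * (z - q) := by
  have hp : z - p ≠ 0 := fun h => hz (by simpa using congrArg im h)
  constructor
  · intro h
    set r := ((z - q) / (z - p) ^ 2).re
    have hr : z - q = r * (z - p) ^ 2 := by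
      rw [← div_eq_iff (pow_ne_zero 2 hp)]; exact Complex.ext (by simp [r]) (by simp [h])
    have h1 : 2 * r * (z.re - p) = 1 := by
      have := congrArg im hr
      simp only [sub_im, ofReal_im, sub_zero, sq, mul_im, sub_re, ofReal_re] at this
      apply mul_right_cancel₀ hz; linear_combination -this
    calc (z - p) ^ 2 = ((2 * r * (z.re - p) : ℝ) : ℂ) * (z - p) ^ 2 := by rw [h1]; simp
      _ = 2 * (z.re - p) * (z - q) := by rw [hr]; push_cast; ring
  · intro h
    rw [div_sq_eq_of_sq_eq hz h, ofReal_im]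

theorem one_add_two_mul_div_sq_neg_iff (hz : z.im ≠ 0) {t : ℝ} (ht : t ≠ 0) :
    1 + 2 * t * ((z - q) / (z - p) ^ 2) < 0 ↔
      (z.re - q) ^ 2 + z.im ^ 2 = (p - q) ^ 2 ∧ (z.re - p) * (z.re - p + t) < 0 := by
  have hreal : ∀ w : ℂ, 1 + 2 * t * w < 0 ↔ w.im = 0 ∧ 1 + 2 * t * w.re < 0 := fun w => by
    rw [neg_iff, and_comm]
    simp [ht]
  rw [hreal, im_div_sq_eq_zero_iff hz, ← sq_sub_eq_two_mul_iff]
  refine and_congr_right fun h => ?_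
  rw [div_sq_eq_of_sq_eq hz h, ofReal_re, ← one_add_div_neg_iff, mul_inv]
  ring_nf

end

theorem discriminant_div_sq_eq {a b c d : ℝ} (ha : a ≠ 0) (hc : c ≠ 0) {z : ℂ}
    (hA : (a : ℂ) * z + b ≠ 0) :
    ((a * z + b) ^ 2 + 4 * (c * z + d)) / (a * z + b) ^ 2 =
      1 + 2 * (2 * c / a ^ 2 : ℝ) * ((z - (-d / c : ℝ)) / (z - (-b / a : ℝ)) ^ 2) := by
  have ha' : (a : ℂ) ≠ 0 := ofReal_ne_zero.2 ha
  have hc' : (c : ℂ) ≠ 0 := ofReal_ne_zero.2 hc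
  push_cast
  simp only [neg_div, sub_neg_eq_add]
  field_simp
  ring

end Complex

theorem stmt_6 (a b c d x y : ℝ) (h : a * c ≠ 0) (hy : y ≠ 0)
    (hAD : ((a : ℂ) * ((x : ℂ) + (y : ℂ) * Complex.I) + (b : ℂ))
        * (((a : ℂ) * ((x : ℂ) + (y : ℂ) * Complex.I) + (b : ℂ)) ^ 2
          + 4 * ((c : ℂ) * ((x : ℂ) + (y : ℂ) * Complex.I) + (d : ℂ))) ≠ 0) :
    (‖(((a : ℂ) * ((x : ℂ) + (y : ℂ) * Complex.I) + (b : ℂ))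
        + (((a : ℂ) * ((x : ℂ) + (y : ℂ) * Complex.I) + (b : ℂ)) ^ 2
            + 4 * ((c : ℂ) * ((x : ℂ) + (y : ℂ) * Complex.I) + (d : ℂ))) ^ ((1 : ℂ) / 2))‖ =
      ‖(((a : ℂ) * ((x : ℂ) + (y : ℂ) * Complex.I) + (b : ℂ))
        - (((a : ℂ) * ((x : ℂ) + (y : ℂ) * Complex.I) + (b : ℂ)) ^ 2
            + 4 * ((c : ℂ) * ((x : ℂ) + (y : ℂ) * Complex.I) + (d : ℂ))) ^ ((1 : ℂ) / 2))‖)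
    ↔ ((x - (-d / c)) ^ 2 + y ^ 2 = ((-b / a) - (-d / c)) ^ 2 ∧
        (x - (-b / a)) * (x - (-b / a) + 2 * c / a ^ 2) < 0) := by
  obtain ⟨ha, hc⟩ := mul_ne_zero_iff.mp h
  obtain ⟨hA, hD⟩ := mul_ne_zero_iff.mp hAD
  set z : ℂ := x + y * Complex.I
  have hre : z.re = x := by simp [z]
  have him : z.im = y := by simp [z]
  rw [Complex.norm_add_sqrt_eq_norm_sub_sqrt_iff hA hD, Complex.discriminant_div_sq_eq ha hc hA,
    Complex.one_add_two_mul_div_sq_neg_iff (him ▸ hy) (by positivity), hre, him]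
end

section
/- Let a, b, c, d be real numbers with ac ≠ 0, x_A = −b/a, x_B = −d/c, and suppose Δ_Δ := c² − a²(cx_A + d) > 0 and c(x_A − x_B) ≤ 0 (i.e., B(x_A) ≤ 0). Then the intersection of the circle C₀ = {z ∈ ℂ : |z − x_B| = |x_A − x_B|} with the strip S₀ = {z : |Re z − x_A| ≤ |2c/a²| and c·(Re z − x_A) ≤ 0} is exactly the singleton {x_A}. -/
/-! Write `z = x_A + u + i y`. On the circle, `u² + 2u(x_A - x_B) + y² = 0`; the strip condition
`c u ≤ 0` together with `c (x_A - x_B) ≤ 0` makes `u (x_A - x_B) ≥ 0`, so all three terms are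
nonnegative and `u = y = 0`. -/

lemma mul_nonneg_of_mul_nonpos_of_mul_nonpos {c u v : ℝ} (hc : c ≠ 0) (hu : c * u ≤ 0)
    (hv : c * v ≤ 0) : 0 ≤ u * v := by
  have h : 0 ≤ c ^ 2 * (u * v) := by
    calc (0 : ℝ) ≤ (c * u) * (c * v) := mul_nonneg_of_nonpos_of_nonpos hu hv
      _ = c ^ 2 * (u * v) := by ring
  exact nonneg_of_mul_nonneg_right (by rwa [mul_comm] at h) (by positivity)

lemma Complex.eq_ofReal_of_norm_sub_eq_of_mul_nonneg {z : ℂ} {x p : ℝ}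
    (hz : ‖z - p‖ = |x - p|) (hsign : 0 ≤ (z.re - x) * (x - p)) : z = x := by
  have hsq : (z.re - p) ^ 2 + z.im ^ 2 = (x - p) ^ 2 := by
    have := congrArg (· ^ 2) hz
    simpa only [Complex.sq_norm, Complex.normSq_apply, sq_abs, Complex.sub_re,
      Complex.ofReal_re, Complex.sub_im, Complex.ofReal_im, sub_zero, ← sq] using this
  have hre : z.re = x := by nlinarith [sq_nonneg (z.re - x), sq_nonneg z.im]
  have him : z.im = 0 := by nlinarith [sq_nonneg z.im]
  exact Complex.ext (by simpa using hre) (by simpa using him)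

theorem stmt_8_general (a b c d : ℝ) (h : a * c ≠ 0)
    (hB : c * ((-b / a) - (-d / c)) ≤ 0) :
    {z : ℂ | ‖z - ((-d / c : ℝ) : ℂ)‖ = |(-b / a) - (-d / c)|} ∩
      {z : ℂ | |z.re - (-b / a)| ≤ |2 * c / a ^ 2| ∧ c * (z.re - (-b / a)) ≤ 0}
    = {((-b / a : ℝ) : ℂ)} := by
  have hc : c ≠ 0 := right_ne_zero_of_mul h
  ext z
  constructor
  · rintro ⟨hz, -, hcz⟩
    exact Complex.eq_ofReal_of_norm_sub_eq_of_mul_nonneg hz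
      (mul_nonneg_of_mul_nonpos_of_mul_nonpos hc hcz hB)
  · rintro rfl
    refine ⟨?_, by simp, by simp⟩
    rw [Set.mem_ofPred_eq, ← Complex.ofReal_sub, Complex.norm_real, Real.norm_eq_abs]

theorem stmt_8 (a b c d : ℝ) (h : a * c ≠ 0)
    (hΔΔ : 0 < c ^ 2 - a ^ 2 * (c * (-b / a) + d))
    (hB : c * ((-b / a) - (-d / c)) ≤ 0) :
    {z : ℂ | ‖z - ((-d / c : ℝ) : ℂ)‖ = |(-b / a) - (-d / c)|} ∩
      {z : ℂ | |z.re - (-b / a)| ≤ |2 * c / a ^ 2| ∧ c * (z.re - (-b / a)) ≤ 0}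
    = {((-b / a : ℝ) : ℂ)} :=
  stmt_8_general a b c d h hB
end

section
/- Let a, b, c, d be real numbers with ac ≠ 0, x_A = −b/a, x_B = −d/c, and suppose Δ_Δ := c² − a²(cx_A + d) > 0 and B(x_A) := cx_A + d > 0. Then the circle C₀ = {z ∈ ℂ : |z − x_B| = |x_A − x_B|} is entirely contained in the strip S₀ = {z : |Re z − x_A| ≤ |2c/a²| and c(Re z − x_A) ≤ 0}. -/
/-!
Since `B(x_A) = c (x_A - x_B)`, the hypothesis `B(x_A) > 0` says that `x_A - x_B` has the sign of
`c`. The real parts of the points of `C₀` fill the segment between `x_A` and `2 x_B - x_A`, so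
`c (Re z - x_A) ≤ 0` and `|Re z - x_A| ≤ 2 |x_A - x_B| = 2 B(x_A) / |c|`, which is at most
`2 |c| / a²` because `a² B(x_A) ≤ c²`, i.e. `Δ_Δ ≥ 0`.
-/

lemma Complex.abs_re_sub_ofReal_le_norm (z : ℂ) (x : ℝ) : |z.re - x| ≤ ‖z - x‖ := by
  simpa using Complex.abs_re_le_norm (z - x)

lemma sub_mul_sub_nonpos_of_abs_sub_le {t p q : ℝ} (h : |t - q| ≤ |p - q|) :
    (t - p) * (p - q) ≤ 0 := by
  have hsq : (t - q) ^ 2 ≤ (p - q) ^ 2 := sq_le_sq.mpr h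
  nlinarith [sq_nonneg (t - p)]

lemma abs_sub_le_two_mul_of_abs_sub_le {t p q : ℝ} (h : |t - q| ≤ |p - q|) :
    |t - p| ≤ 2 * |p - q| := by
  have := abs_sub_le t q p
  rw [abs_sub_comm q p] at this
  linarith

lemma abs_le_abs_div_sq_of_sq_mul_le_sq {a c u : ℝ} (ha : a ≠ 0) (hcu : 0 < c * u)
    (h : a ^ 2 * (c * u) ≤ c ^ 2) : |u| ≤ |c / a ^ 2| := by
  have ha2 : 0 < a ^ 2 := by positivity
  have hc : 0 < |c| := abs_pos.mpr (left_ne_zero_of_mul hcu.ne')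
  have hcu_abs : c * u = |c| * |u| := by rw [← abs_mul, abs_of_pos hcu]
  rw [abs_div, abs_of_pos ha2, le_div_iff₀ ha2]
  rw [hcu_abs, ← sq_abs c] at h
  nlinarith

theorem stmt_9 (a b c d : ℝ) (h : a * c ≠ 0)
    (hΔΔ : 0 < c ^ 2 - a ^ 2 * (c * (-b / a) + d))
    (hB : 0 < c * (-b / a) + d) :
    {z : ℂ | ‖z - ((-d / c : ℝ) : ℂ)‖ = |(-b / a) - (-d / c)|} ⊆
      {z : ℂ | |z.re - (-b / a)| ≤ |2 * c / a ^ 2| ∧ c * (z.re - (-b / a)) ≤ 0} := by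
  intro z hz
  set xA := -b / a
  set xB := -d / c
  have hBx : c * (xA - xB) = c * xA + d := by
    rw [mul_sub, mul_div_cancel₀ _ (right_ne_zero_of_mul h)]
    ring
  have hre : |z.re - xB| ≤ |xA - xB| := hz ▸ Complex.abs_re_sub_ofReal_le_norm z xB
  have hsign := sub_mul_sub_nonpos_of_abs_sub_le hre
  refine ⟨?_, by nlinarith⟩
  have hradius : |xA - xB| ≤ |c / a ^ 2| :=
    abs_le_abs_div_sq_of_sq_mul_le_sq (left_ne_zero_of_mul h) (hBx ▸ hB) (by rw [hBx]; linarith)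
  calc |z.re - xA| ≤ 2 * |xA - xB| := abs_sub_le_two_mul_of_abs_sub_le hre
    _ ≤ 2 * |c / a ^ 2| := by linarith
    _ = |2 * c / a ^ 2| := by rw [mul_div_assoc, abs_mul, abs_two]
end

section
/- Let a, b, c, d be real numbers with ac ≠ 0 such that Δ_Δ := c² − a²(cx_A + d) > 0 and B(x_A) := cx_A + d > 0, where x_A = −b/a and x_B = −d/c. Let x_Δ^± = x_A + (−2c ± 2√Δ_Δ)/a² be the two real roots of Δ(z) = a²z² + (2ab+4c)z + (b²+4d). Then the intersection of the real interval [x_Δ^−, x_Δ^+] with the circle C₀ = {z : |z − x_B| = |x_A − x_B|} is exactly the single point {2x_B − x_A}. -/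
/-!
On the real line the circle `C₀` is the pair `{x_A, 2 x_B - x_A}`, and `z ∈ J_Δ` reads
`|a² (z - x_A) + 2c| ≤ 2 √Δ_Δ`. At `z = x_A` this would force `c² ≤ Δ_Δ = c² - a² B(x_A)`,
impossible as `B(x_A) > 0`. At the reflection `z = 2 x_B - x_A` the left side equals
`2 |Δ_Δ / c|`, and `(Δ_Δ / c)² ≤ Δ_Δ` because `0 < Δ_Δ ≤ c²`.
-/

open Set

section OrderedField

variable {K : Type*} [Field K] [LinearOrder K] [IsStrictOrderedRing K]

theorem abs_sub_eq_abs_sub_iff {x p m : K} : |x - m| = |p - m| ↔ x = p ∨ x = 2 * m - p := by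
  rw [abs_eq_abs]
  constructor <;> rintro (h | h) <;> [left; right; left; right] <;> linarith

theorem mem_Icc_add_div_iff {x p u v k : K} (hk : 0 < k) :
    x ∈ Icc (p + (u - v) / k) (p + (u + v) / k) ↔ |(x - p) * k - u| ≤ v := by
  have h₁ : p + (u - v) / k ≤ x ↔ u - v ≤ (x - p) * k := by
    rw [← le_sub_iff_add_le', div_le_iff₀ hk]
  have h₂ : x ≤ p + (u + v) / k ↔ (x - p) * k ≤ u + v := by
    rw [← sub_le_iff_le_add', le_div_iff₀ hk]
  rw [mem_Icc, h₁, h₂, abs_sub_le_iff]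
  constructor <;> rintro ⟨_, _⟩ <;> constructor <;> linarith

theorem Icc_sep_abs_sub_eq_abs_sub_eq_singleton {p m u v k : K} (hk : 0 < k) (hp : v < |u|)
    (hq : |2 * (m - p) * k - u| ≤ v) :
    {x ∈ Icc (p + (u - v) / k) (p + (u + v) / k) | |x - m| = |p - m|} = {2 * m - p} := by
  ext x
  simp only [mem_ofPred_eq, mem_singleton_iff, mem_Icc_add_div_iff hk, abs_sub_eq_abs_sub_iff]
  constructor
  · rintro ⟨hx, rfl | rfl⟩
    · rw [sub_self, zero_mul, zero_sub, abs_neg] at hx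
      linarith
    · rfl
  · rintro rfl
    exact ⟨by convert hq using 3; ring, Or.inr rfl⟩

end OrderedField

theorem Complex.ofReal_image_inter_norm_sub_eq (S : Set ℝ) (m ρ : ℝ) :
    ((fun x : ℝ => (x : ℂ)) '' S) ∩ {z : ℂ | ‖z - (m : ℂ)‖ = ρ} =
      (fun x : ℝ => (x : ℂ)) '' {x ∈ S | |x - m| = ρ} := by
  ext z
  constructor
  · rintro ⟨⟨x, hxS, rfl⟩, hx⟩
    refine ⟨x, ⟨hxS, ?_⟩, rfl⟩
    rwa [mem_ofPred_eq, ← Complex.ofReal_sub, Complex.norm_real, Real.norm_eq_abs] at hx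
  · rintro ⟨x, ⟨hxS, hx⟩, rfl⟩
    refine ⟨⟨x, hxS, rfl⟩, ?_⟩
    rwa [mem_ofPred_eq, ← Complex.ofReal_sub, Complex.norm_real, Real.norm_eq_abs]

theorem Real.sqrt_lt_abs {D c : ℝ} (hD : 0 ≤ D) (h : D < c ^ 2) : √D < |c| :=
  Real.sqrt_sq_eq_abs c ▸ Real.sqrt_lt_sqrt hD h

theorem abs_div_le_sqrt {D c : ℝ} (hD : 0 ≤ D) (hDc : D ≤ c ^ 2) : |D / c| ≤ √D := by
  apply Real.abs_le_sqrt
  rw [div_pow]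
  rcases eq_or_ne c 0 with rfl | hc
  · simpa
  · rw [div_le_iff₀ (by positivity)]; nlinarith

theorem stmt_10 (a b c d : ℝ) (h : a * c ≠ 0)
    (hΔΔ : 0 < c ^ 2 - a ^ 2 * (c * (-b / a) + d))
    (hB : 0 < c * (-b / a) + d) :
    ((fun x : ℝ => (x : ℂ)) ''
        Set.Icc ((-b / a) + (-2 * c - 2 * Real.sqrt (c ^ 2 - a ^ 2 * (c * (-b / a) + d))) / a ^ 2)
                ((-b / a) + (-2 * c + 2 * Real.sqrt (c ^ 2 - a ^ 2 * (c * (-b / a) + d))) / a ^ 2)) ∩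
      {z : ℂ | ‖z - ((-d / c : ℝ) : ℂ)‖ = |(-b / a) - (-d / c)|}
    = {((2 * (-d / c) - (-b / a) : ℝ) : ℂ)} := by
  have ha : a ≠ 0 := left_ne_zero_of_mul h
  have hc : c ≠ 0 := right_ne_zero_of_mul h
  set D := c ^ 2 - a ^ 2 * (c * (-b / a) + d) with hD
  have hDc : D < c ^ 2 := sub_lt_self _ (mul_pos (by positivity) hB)
  have hreflect : 2 * (-d / c - -b / a) * a ^ 2 - -2 * c = 2 * (D / c) := by
    rw [hD]; field_simp; ring
  rw [Complex.ofReal_image_inter_norm_sub_eq,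
    Icc_sep_abs_sub_eq_abs_sub_eq_singleton (by positivity) ?_ ?_, image_singleton]
  · rw [abs_mul, abs_neg, abs_two]
    linarith [Real.sqrt_lt_abs hΔΔ.le hDc]
  · rw [hreflect, abs_mul, abs_two]
    linarith [abs_div_le_sqrt hΔΔ.le hDc.le]
end

section
/- Let a, b, c, d be real numbers with ac ≠ 0, Δ_Δ := c² − a²(cx_A + d) > 0, and B(x_A) := cx_A + d > 0. Let x₀ = 2x_B − x_A and let x_Δ^± be the roots of Δ(z). Then x₀ − (x_Δ^− + x_Δ^+)/2 = 2Δ_Δ/(c·a²); in particular, if c > 0 then the part of the interval [x_Δ^−, x_Δ^+] lying to the left of x₀ (outside the circle C₀) is strictly longer than the part to the right of x₀. -/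
theorem stmt_11 (a b c d : ℝ) (h : a * c ≠ 0)
    (hΔΔ : 0 < c ^ 2 - a ^ 2 * (c * (-b / a) + d))
    (hB : 0 < c * (-b / a) + d) :
    (2 * (-d / c) - (-b / a)) -
        (((-b / a) + (-2 * c - 2 * Real.sqrt (c ^ 2 - a ^ 2 * (c * (-b / a) + d))) / a ^ 2) +
         ((-b / a) + (-2 * c + 2 * Real.sqrt (c ^ 2 - a ^ 2 * (c * (-b / a) + d))) / a ^ 2)) / 2
      = 2 * (c ^ 2 - a ^ 2 * (c * (-b / a) + d)) / (c * a ^ 2) ∧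
    (0 < c →
      (2 * (-d / c) - (-b / a)) -
          ((-b / a) + (-2 * c - 2 * Real.sqrt (c ^ 2 - a ^ 2 * (c * (-b / a) + d))) / a ^ 2)
        > ((-b / a) + (-2 * c + 2 * Real.sqrt (c ^ 2 - a ^ 2 * (c * (-b / a) + d))) / a ^ 2)
          - (2 * (-d / c) - (-b / a))) := by
  have ha : a ≠ 0 := fun h0 => h (by simp [h0])
  have hc : c ≠ 0 := fun h0 => h (by simp [h0])
  have ha2 : a ^ 2 ≠ 0 := pow_ne_zero 2 ha
  constructor
  · field_simp
    ring
  · intro hc0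
    rw [gt_iff_lt, ← sub_pos]
    have key : ((2 * (-d / c) - (-b / a)) -
          ((-b / a) + (-2 * c - 2 * Real.sqrt (c ^ 2 - a ^ 2 * (c * (-b / a) + d))) / a ^ 2))
        - (((-b / a) + (-2 * c + 2 * Real.sqrt (c ^ 2 - a ^ 2 * (c * (-b / a) + d))) / a ^ 2)
          - (2 * (-d / c) - (-b / a)))
        = 4 * (c ^ 2 - a ^ 2 * (c * (-b / a) + d)) / (c * a ^ 2) := by
      field_simp
      ring
    rw [key]
    positivity
end

section
/- Let a, c > 0 and b, d < 0 with x_A := −b/a < x_B := −d/c. Define Δ(z) = (az+b)² + 4(cz+d) and let x_Δ^± be its roots. Then Δ(x_A) = 4(cx_A + d) < 0, hence x_Δ^− < x_A < x_Δ^+, x_Δ^+ > 0, a·x_Δ^+ + b > 0 > a·x_Δ^− + b, and x_Δ^+ < x_B. -/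
theorem stmt_13 (a b c d x1 x2 : ℝ) (ha : 0 < a) (hc : 0 < c) (hb : b < 0) (hd : d < 0)
    (hAB : -b / a < -d / c)
    (hfac : ∀ z : ℝ, (a * z + b) ^ 2 + 4 * (c * z + d) = a ^ 2 * (z - x1) * (z - x2))
    (hle : x1 ≤ x2) :
    (a * (-b / a) + b) ^ 2 + 4 * (c * (-b / a) + d) = 4 * (c * (-b / a) + d) ∧
    4 * (c * (-b / a) + d) < 0 ∧
    x1 < -b / a ∧ -b / a < x2 ∧ 0 < x2 ∧
    0 < a * x2 + b ∧ a * x1 + b < 0 ∧ x2 < -d / c := by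
  have ha' : a ≠ 0 := ne_of_gt ha
  have hc' : c ≠ 0 := ne_of_gt hc
  have h0 : a * (-b / a) + b = 0 := by field_simp; ring
  have hΔA : (a * (-b / a) + b) ^ 2 + 4 * (c * (-b / a) + d) = 4 * (c * (-b / a) + d) := by
    rw [h0]; ring
  have hcA : c * (-b / a) + d < 0 := by
    have h1 : (-b / a) * c < -d := (lt_div_iff₀ hc).mp hAB
    nlinarith
  have hAneg : a ^ 2 * ((-b / a) - x1) * ((-b / a) - x2) < 0 := by
    have := hfac (-b / a)
    nlinarith
  have h1A : x1 < -b / a := by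
    by_contra h
    push_neg at h
    have h2 : -b / a ≤ x2 := le_trans h hle
    nlinarith [mul_nonneg (mul_nonneg (sq_nonneg a) (sub_nonneg.mpr h)) (sub_nonneg.mpr h2)]
  have hA2 : -b / a < x2 := by
    by_contra h
    push_neg at h
    have h2 : x1 ≤ -b / a := le_trans hle h
    nlinarith [mul_nonneg (mul_nonneg (sq_nonneg a) (sub_nonneg.mpr h2)) (sub_nonneg.mpr h)]
  have hApos : 0 < -b / a := div_pos (neg_pos.mpr hb) ha
  have hx2pos : 0 < x2 := lt_trans hApos hA2
  have hax2 : 0 < a * x2 + b := by nlinarith [(mul_lt_mul_iff_right₀ ha).mpr hA2, h0]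
  have hax1 : a * x1 + b < 0 := by nlinarith [(mul_lt_mul_iff_right₀ ha).mpr h1A, h0]
  have hB0 : c * (-d / c) + d = 0 := by field_simp; ring
  have haxB : 0 < a * (-d / c) + b := by
    have := (mul_lt_mul_iff_right₀ ha).mpr hAB
    nlinarith
  have hBfac := hfac (-d / c)
  have hx2B : x2 < -d / c := by
    by_contra h
    push_neg at h
    have h1 : x1 < -d / c := h1A.trans hAB
    nlinarith [mul_nonneg (mul_nonneg (sq_nonneg a) (sub_nonneg.mpr h1.le)) (sub_nonneg.mpr h),
      pow_pos haxB 2]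
  exact ⟨hΔA, by linarith, h1A, hA2, hx2pos, hax2, hax1, hx2B⟩
end

section
/- Let a, b, c, d be real numbers with ac ≠ 0, and let x be a real root of Δ(z) = (az+b)² + 4(cz+d). If (Wₙ) is the polynomial sequence with W₀ = 1, W₁(z) = z, Wₙ = (az+b)Wₙ₋₁ + (cz+d)Wₙ₋₂, then Wₙ(x) = ((A(x) + n·h(x))/2)·(A(x)/2)^(n−1) for all n ≥ 1, where A(x) = ax+b and h(x) = (2−a)x − b. -/
open Polynomial in
theorem stmt_16 (a b c d x : ℝ) (h : a * c ≠ 0)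
    (hx : (a * x + b) ^ 2 + 4 * (c * x + d) = 0)
    (W : ℕ → Polynomial ℝ) (h0 : W 0 = 1) (h1 : W 1 = X)
    (hrec : ∀ n, W (n + 2) = (C a * X + C b) * W (n + 1) + (C c * X + C d) * W n) :
    ∀ n : ℕ, 1 ≤ n →
      (W n).eval x = ((a * x + b) + (n : ℝ) * ((2 - a) * x - b)) / 2
        * ((a * x + b) / 2) ^ (n - 1) := by
  have key : ∀ n : ℕ,
      (W (n+1)).eval x = ((a*x+b) + ((n:ℝ)+1) * ((2-a)*x-b)) / 2 * ((a*x+b)/2)^n ∧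
      (W (n+2)).eval x = ((a*x+b) + ((n:ℝ)+2) * ((2-a)*x-b)) / 2 * ((a*x+b)/2)^(n+1) := by
    intro n
    induction n with
    | zero =>
      constructor
      · simp [h1]; ring
      · have := hrec 0
        rw [this]
        simp [h0, h1]
        linear_combination (1/4 : ℝ) * hx
    | succ m ih =>
      obtain ⟨ih1, ih2⟩ := ih
      constructor
      · push_cast
        push_cast at ih2
        linear_combination ih2
      · have hr := hrec (m+1)
        have : (W (m+1+2)).eval x
            = (a*x+b) * (W (m+2)).eval x + (c*x+d) * (W (m+1)).eval x := by
          rw [hr]; simp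
        rw [this, ih1, ih2]
        push_cast
        linear_combination ((1/4) * (((a*x+b) + ((m:ℝ)+1) * ((2-a)*x-b)) / 2 * ((a*x+b)/2)^m)) * hx
  intro n hn
  obtain ⟨m, rfl⟩ := Nat.exists_eq_add_of_le hn
  have := (key m).1
  rw [Nat.add_comm 1 m] at *
  simpa using this
end

section
/- Let a, c > 0 and b, d < 0 with −b/a = −d/c =: x_A. Define the sequence of polynomials Wₙ by W₀ = 1, W₁(z) = z, Wₙ = (az+b)Wₙ₋₁ + (cz+d)Wₙ₋₂, and set Uₙ(z) = Wₙ(z)/(az+b)^⌊n/2⌋. Then each Uₙ is a polynomial of degree ⌈n/2⌉, and the sequence satisfies U₀ = 1, U₁(z) = z, Uₙ = Uₙ₋₁ + (c/a)·Uₙ₋₂ for even n, and Uₙ = (az+b)Uₙ₋₁ + (c/a)·Uₙ₋₂ for odd n ≥ 3. -/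
/-! Since `b/a = d/c`, the second coefficient factors as `cz + d = (c/a)·p` with `p = az + b`, so
`Wₙ₊₂ = p·(Wₙ₊₁ + (c/a)·Wₙ)`. Hence one factor `p` is gained every second step: with
`Wₙ = p^⌊n/2⌋ Uₙ`, the power of `p` goes up exactly when `n` becomes even, and cancelling it
leaves the recurrence `Uₙ₊₂ = Uₙ₊₁ + (c/a)Uₙ` (n even) or `Uₙ₊₂ = p Uₙ₊₁ + (c/a)Uₙ` (n odd).
The degree of `Uₙ` is then read off the dominant term, which is always the one with `Uₙ₊₁`. -/

open Polynomial

section MixedRec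

variable {R : Type*} [Semiring R]

def mixedRec (p q u₀ u₁ : R) : ℕ → R
  | 0 => u₀
  | 1 => u₁
  | n + 2 => if Even n then mixedRec p q u₀ u₁ (n + 1) + q * mixedRec p q u₀ u₁ n
      else p * mixedRec p q u₀ u₁ (n + 1) + q * mixedRec p q u₀ u₁ n

variable (p q u₀ u₁ : R)

@[simp] theorem mixedRec_zero : mixedRec p q u₀ u₁ 0 = u₀ := rfl

@[simp] theorem mixedRec_one : mixedRec p q u₀ u₁ 1 = u₁ := rfl

theorem mixedRec_two_mul_add_two (k : ℕ) :
    mixedRec p q u₀ u₁ (2 * k + 2) =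
      mixedRec p q u₀ u₁ (2 * k + 1) + q * mixedRec p q u₀ u₁ (2 * k) := by
  rw [mixedRec, if_pos (even_two_mul k)]

theorem mixedRec_two_mul_add_three (k : ℕ) :
    mixedRec p q u₀ u₁ (2 * k + 3) =
      p * mixedRec p q u₀ u₁ (2 * k + 2) + q * mixedRec p q u₀ u₁ (2 * k + 1) := by
  rw [mixedRec, if_neg (Nat.not_even_two_mul_add_one k)]

end MixedRec

theorem eq_pow_mul_mixedRec_of_rec {R : Type*} [CommSemiring R] {p q u₀ u₁ : R} {W : ℕ → R}
    (h0 : W 0 = u₀) (h1 : W 1 = u₁) (hrec : ∀ n, W (n + 2) = p * W (n + 1) + q * p * W n)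
    (n : ℕ) : W n = p ^ (n / 2) * mixedRec p q u₀ u₁ n := by
  induction n using Nat.twoStepInduction with
  | zero => simp [h0]
  | one => simp [h1]
  | more n ih ih' =>
    obtain ⟨k, rfl | rfl⟩ := Nat.even_or_odd' n
    · rw [hrec, ih, ih', mixedRec_two_mul_add_two,
        show (2 * k + 1) / 2 = k by omega, show (2 * k + 2) / 2 = k + 1 by omega,
        show 2 * k / 2 = k by omega]
      ring
    · rw [hrec, ih, ih', show 2 * k + 1 + 2 = 2 * k + 3 by omega, mixedRec_two_mul_add_three,
        show (2 * k + 1 + 1) / 2 = k + 1 by omega, show (2 * k + 3) / 2 = k + 1 by omega,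
        show (2 * k + 1) / 2 = k by omega]
      ring

theorem degree_mixedRec {R : Type*} [CommRing R] [IsDomain R] {p : R[X]} (hp : p.degree = 1)
    {r : R} (hr : r ≠ 0) (n : ℕ) :
    (mixedRec p (C r) 1 X n).degree = ((n + 1) / 2 : ℕ) := by
  have key : ∀ k : ℕ, (mixedRec p (C r) 1 X (2 * k)).degree = k ∧
      (mixedRec p (C r) 1 X (2 * k + 1)).degree = (k + 1 : ℕ) := by
    intro k
    induction k with
    | zero => simp
    | succ k ih =>
      obtain ⟨hev, hodd⟩ := ih
      have hev' : (mixedRec p (C r) 1 X (2 * k + 2)).degree = (k + 1 : ℕ) := by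
        rw [mixedRec_two_mul_add_two, degree_add_eq_left_of_degree_lt, hodd]
        rw [degree_C_mul hr, hev, hodd]
        exact_mod_cast k.lt_succ_self
      have hlead : (p * mixedRec p (C r) 1 X (2 * k + 2)).degree = (k + 2 : ℕ) := by
        rw [degree_mul, hp, hev', add_comm]
        rfl
      refine ⟨hev', ?_⟩
      rw [show 2 * (k + 1) + 1 = 2 * k + 3 by ring, mixedRec_two_mul_add_three,
        degree_add_eq_left_of_degree_lt, hlead]
      rw [degree_C_mul hr, hodd, hlead]
      exact_mod_cast (k + 1).lt_succ_self
  obtain ⟨k, rfl | rfl⟩ := Nat.even_or_odd' n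
  · rw [(key k).1]; congr 1; omega
  · rw [(key k).2]; congr 1; omega

open Polynomial in
theorem stmt_18_general (a b c d : ℝ) (ha : 0 < a) (hc : 0 < c)
    (hAB : -b / a = -d / c)
    (W : ℕ → Polynomial ℝ) (h0 : W 0 = 1) (h1 : W 1 = X)
    (hrec : ∀ n, W (n + 2) = (C a * X + C b) * W (n + 1) + (C c * X + C d) * W n) :
    (∀ n : ℕ, (C a * X + C b) ^ (n / 2) ∣ W n) ∧
    ∀ U : ℕ → Polynomial ℝ, (∀ n : ℕ, W n = (C a * X + C b) ^ (n / 2) * U n) →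
      (U 0 = 1 ∧ U 1 = X ∧
        (∀ n : ℕ, (U n).degree = ((n + 1) / 2 : ℕ)) ∧
        (∀ n : ℕ, Even (n + 2) → U (n + 2) = U (n + 1) + C (c / a) * U n) ∧
        (∀ n : ℕ, Odd (n + 2) →
          U (n + 2) = (C a * X + C b) * U (n + 1) + C (c / a) * U n)) := by
  set p := C a * X + C b
  set V := mixedRec p (C (c / a)) 1 X
  have hp : p ≠ 0 := ne_zero_of_degree_gt (n := 0) (by rw [degree_linear ha.ne']; decide)
  have hcd : C c * X + C d = C (c / a) * p := by
    have hd : d = c / a * b := by field_simp at hAB ⊢; linarith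
    rw [hd, mul_add, ← mul_assoc, ← C_mul, div_mul_cancel₀ c ha.ne', C_mul]
  have hW : ∀ n, W n = p ^ (n / 2) * V n :=
    eq_pow_mul_mixedRec_of_rec h0 h1 fun n => by rw [hrec, hcd]
  refine ⟨fun n => ⟨V n, hW n⟩, fun U hU => ?_⟩
  obtain rfl : U = V := funext fun n =>
    mul_left_cancel₀ (pow_ne_zero _ hp) ((hU n).symm.trans (hW n))
  refine ⟨rfl, rfl, degree_mixedRec (degree_linear ha.ne') (div_pos hc ha).ne', ?_, ?_⟩
  · rintro n ⟨k, hk⟩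
    obtain rfl : n = 2 * (k - 1) := by omega
    exact mixedRec_two_mul_add_two ..
  · rintro n ⟨k, hk⟩
    obtain rfl : n = 2 * (k - 1) + 1 := by omega
    exact mixedRec_two_mul_add_three ..

open Polynomial in
theorem stmt_18 (a b c d : ℝ) (ha : 0 < a) (hc : 0 < c) (hb : b < 0) (hd : d < 0)
    (hAB : -b / a = -d / c)
    (W : ℕ → Polynomial ℝ) (h0 : W 0 = 1) (h1 : W 1 = X)
    (hrec : ∀ n, W (n + 2) = (C a * X + C b) * W (n + 1) + (C c * X + C d) * W n) :
    (∀ n : ℕ, (C a * X + C b) ^ (n / 2) ∣ W n) ∧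
    ∀ U : ℕ → Polynomial ℝ, (∀ n : ℕ, W n = (C a * X + C b) ^ (n / 2) * U n) →
      (U 0 = 1 ∧ U 1 = X ∧
        (∀ n : ℕ, (U n).degree = ((n + 1) / 2 : ℕ)) ∧
        (∀ n : ℕ, Even (n + 2) → U (n + 2) = U (n + 1) + C (c / a) * U n) ∧
        (∀ n : ℕ, Odd (n + 2) →
          U (n + 2) = (C a * X + C b) * U (n + 1) + C (c / a) * U n)) :=
  stmt_18_general a b c d ha hc hAB W h0 h1 hrec
end

section
/- Let a, c > 0 and b, d < 0 with x_A := −b/a < x_B := −d/c, and let (Wₙ) be defined by W₀ = 1, W₁(z) = z, Wₙ(z) = (az+b)Wₙ₋₁(z) + (cz+d)Wₙ₋₂(z). Then for every n ≥ 0 the polynomial Wₙ has n distinct real roots, all lying in a common open interval (u, v) independent of n with u < 0 < v, and the roots of Wₙ₊₁ strictly interlace the roots of Wₙ. -/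
/-!
For `x ≥ x_B = -d/c` both coefficients `az + b` and `cz + d` are nonnegative, so every `Wₙ` is
positive there, while for `u` negative enough `(-1)ⁿ Wₙ(u) > 0` for all `n`. At a root `x < x_B`
of `Wₙ₊₁` the recurrence reads `Wₙ₊₂(x) = (cx + d) Wₙ(x)` with `cx + d < 0`. If the roots of
`Wₙ₊₁` interlace those of `Wₙ`, the signs of `Wₙ` alternate along them, hence so do the signs of
`Wₙ₊₂` along `u`, the roots of `Wₙ₊₁`, and `x_B`. The intermediate value theorem then gives
`n + 2` roots of `Wₙ₊₂`, one in each gap, and as `deg Wₙ₊₂ ≤ n + 2` there are no others.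
-/

open Polynomial Finset

namespace Polynomial

variable {R : Type*} [CommRing R] [IsDomain R] {p : R[X]} {n : ℕ} {r : Fin n → R}

theorem roots_eq_map_of_injective (hp0 : p ≠ 0) (hp : p.natDegree ≤ n)
    (hr : Function.Injective r) (hroot : ∀ i, p.IsRoot (r i)) :
    p.roots = univ.val.map r := by
  refine (Multiset.eq_of_le_of_card_le ?_ ?_).symm
  · refine (Multiset.le_iff_subset (univ.nodup.map hr)).2 fun x hx => ?_
    obtain ⟨i, -, rfl⟩ := Multiset.mem_map.1 hx
    exact (mem_roots hp0).2 (hroot i)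
  · simpa using (card_roots' p).trans hp

theorem isRoot_iff_exists_eq_of_injective (hp0 : p ≠ 0) (hp : p.natDegree ≤ n)
    (hr : Function.Injective r) (hroot : ∀ i, p.IsRoot (r i)) (x : R) :
    p.IsRoot x ↔ ∃ i, r i = x := by
  rw [← mem_roots hp0, roots_eq_map_of_injective hp0 hp hr hroot, Multiset.mem_map]
  simp

theorem eval_eq_leadingCoeff_mul_prod_of_injective (hp0 : p ≠ 0) (hp : p.natDegree ≤ n)
    (hr : Function.Injective r) (hroot : ∀ i, p.IsRoot (r i)) (x : R) :
    p.eval x = p.leadingCoeff * ∏ i, (x - r i) := by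
  have hroots := roots_eq_map_of_injective hp0 hp hr hroot
  have hcard : Multiset.card p.roots = p.natDegree :=
    le_antisymm (card_roots' p) (by simpa [hroots] using hp)
  conv_lhs => rw [← C_leadingCoeff_mul_prod_multiset_X_sub_C hcard]
  simp only [hroots, Multiset.map_map, Function.comp_def, Finset.prod_map_val, eval_mul, eval_C,
    eval_prod, eval_sub, eval_X]

end Polynomial

theorem neg_one_pow_card_filter_neg_mul_prod_pos {ι : Type*} (s : Finset ι) {y : ι → ℝ}
    (hy : ∀ i ∈ s, y i ≠ 0) : 0 < (-1) ^ #{i ∈ s | y i < 0} * ∏ i ∈ s, y i := by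
  rw [← prod_filter_mul_prod_filter_not s (y · < 0), ← mul_assoc, ← prod_neg]
  refine mul_pos (prod_pos fun i hi => neg_pos.2 (mem_filter.1 hi).2) (prod_pos fun i hi => ?_)
  obtain ⟨hi, hneg⟩ := mem_filter.1 hi
  exact (not_lt.1 hneg).lt_of_ne' (hy i hi)

theorem mul_neg_of_neg_one_pow_mul_pos {k : ℕ} {x y : ℝ} (hx : 0 < (-1) ^ k * x)
    (hy : 0 < (-1) ^ (k + 1) * y) : x * y < 0 := by
  rcases neg_one_pow_eq_or ℝ k with h | h <;> simp only [h, pow_succ] at hx hy <;> nlinarith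

def IsSortedRoots (p : ℝ[X]) {n : ℕ} (r : Fin n → ℝ) : Prop :=
  StrictMono r ∧ ∀ x, p.IsRoot x ↔ ∃ i, r i = x

def Interlaces {n : ℕ} (r : Fin n → ℝ) (s : Fin (n + 1) → ℝ) : Prop :=
  ∀ i, s i.castSucc < r i ∧ r i < s i.succ

theorem exists_isSortedRoots_of_alternating {p : ℝ[X]} {m : ℕ} (hp0 : p ≠ 0)
    (hp : p.natDegree ≤ m) {e : Fin (m + 1) → ℝ} (he : StrictMono e)
    (halt : ∀ j : Fin m, p.eval (e j.castSucc) * p.eval (e j.succ) < 0) :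
    ∃ t : Fin m → ℝ, IsSortedRoots p t ∧ ∀ j, t j ∈ Set.Ioo (e j.castSucc) (e j.succ) := by
  have hivt : ∀ j : Fin m, ∃ x ∈ Set.Ioo (e j.castSucc) (e j.succ), p.IsRoot x := by
    intro j
    have hcont := p.continuous.continuousOn (s := Set.Icc (e j.castSucc) (e j.succ))
    have hle := (he (Fin.castSucc_lt_succ (i := j))).le
    rcases mul_neg_iff.1 (halt j) with ⟨hl, hr⟩ | ⟨hl, hr⟩
    · exact intermediate_value_Ioo' hle hcont ⟨hr, hl⟩
    · exact intermediate_value_Ioo hle hcont ⟨hl, hr⟩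
  choose t ht hroot using hivt
  have hmono : StrictMono t := fun j k hjk =>
    ((ht j).2.trans_le (he.monotone (Fin.succ_le_castSucc_iff.2 hjk))).trans (ht k).1
  exact ⟨t, ⟨hmono, isRoot_iff_exists_eq_of_injective hp0 hp hmono.injective hroot⟩, ht⟩

theorem IsSortedRoots.neg_one_pow_add_card_mul_eval_pos {p : ℝ[X]} {n : ℕ} {r : Fin n → ℝ}
    (hr : IsSortedRoots p r) (hp : p.natDegree ≤ n) {v : ℝ} (hrv : ∀ i, r i < v)
    (hpv : 0 < p.eval v) {x : ℝ} (hx : ¬ p.IsRoot x) :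
    0 < (-1) ^ (n + #{i | r i < x}) * p.eval x := by
  have hp0 : p ≠ 0 := by rintro rfl; simp at hpv
  have hfac := eval_eq_leadingCoeff_mul_prod_of_injective hp0 hp hr.1.injective
    fun i => (hr.2 _).2 ⟨i, rfl⟩
  have hlc : 0 < p.leadingCoeff := by
    rw [hfac] at hpv
    exact (pos_iff_pos_of_mul_pos hpv).2 (prod_pos fun i _ => sub_pos.2 (hrv i))
  have hsign := neg_one_pow_card_filter_neg_mul_prod_pos univ (y := fun i => r i - x)
    fun i _ => sub_ne_zero.2 fun h => hx ((hr.2 x).2 ⟨i, h⟩)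
  simp only [sub_neg] at hsign
  have hflip : ∏ i, (x - r i) = (-1) ^ n * ∏ i, (r i - x) := by
    simpa using prod_neg (s := univ) fun i => r i - x
  have hsq : ((-1 : ℝ) ^ n) * (-1) ^ n = 1 := by rw [← mul_pow]; norm_num
  set c := #{i | r i < x}
  set P := ∏ i, (r i - x)
  calc 0 < p.leadingCoeff * ((-1) ^ c * P) := mul_pos hlc hsign
    _ = (-1) ^ (n + c) * p.eval x := by
      rw [hfac, hflip, pow_add]
      linear_combination (-(p.leadingCoeff * (-1) ^ c * P)) * hsq

namespace Interlaces

variable {n : ℕ} {r : Fin n → ℝ} {s : Fin (n + 1) → ℝ}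

theorem lt_iff (hrs : Interlaces r s) (hs : StrictMono s) (k : Fin n) (i : Fin (n + 1)) :
    r k < s i ↔ (k : ℕ) < i := by
  constructor
  · intro hk
    by_contra! hik
    exact (hk.trans_le (hs.monotone (Fin.le_def.2 hik))).not_gt (hrs k).1
  · exact fun hk => (hrs k).2.trans_le (hs.monotone (Fin.le_def.2 hk))

theorem ne (hrs : Interlaces r s) (hs : StrictMono s) (k : Fin n) (i : Fin (n + 1)) :
    r k ≠ s i := by
  rcases lt_or_ge (k : ℕ) i with hki | hik
  · exact ((hrs.lt_iff hs k i).2 hki).ne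
  · exact ((hs.monotone (Fin.le_def.2 hik)).trans_lt (hrs k).1).ne'

theorem card_filter_lt (hrs : Interlaces r s) (hs : StrictMono s) (i : Fin (n + 1)) :
    #{k | r k < s i} = i := by
  rw [filter_congr fun k _ => hrs.lt_iff hs k i, Fin.card_filter_val_lt]
  exact min_eq_right (Nat.lt_succ_iff.1 i.2)

theorem exists_isSortedRoots_of_opposite_signs {p q w : ℝ[X]} {n : ℕ} {u v : ℝ}
    {r : Fin n → ℝ} {s : Fin (n + 1) → ℝ} (hp : p.natDegree ≤ n) (hw : w.natDegree ≤ n + 2)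
    (hr : IsSortedRoots p r) (hs : IsSortedRoots q s) (hrs : Interlaces r s)
    (hs_mem : ∀ i, s i ∈ Set.Ioo u v) (hpv : 0 < p.eval v) (hwu : 0 < (-1) ^ n * w.eval u)
    (hwv : 0 < w.eval v) (hopp : ∀ x, x < v → q.IsRoot x → ¬ p.IsRoot x → w.eval x * p.eval x < 0) :
    ∃ t : Fin (n + 2) → ℝ, IsSortedRoots w t ∧ (∀ j, t j ∈ Set.Ioo u v) ∧ Interlaces s t := by
  have hsv : ∀ i, s i < v := fun i => (hs_mem i).2
  have hrv : ∀ k, r k < v := fun k => (hrs k).2.trans (hsv _)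
  have hps : ∀ i, ¬ p.IsRoot (s i) := by
    intro i hi
    obtain ⟨k, hk⟩ := (hr.2 _).1 hi
    exact hrs.ne hs.1 k i hk
  set e : Fin (n + 3) → ℝ := Fin.cons u (Fin.snoc s v)
  have he_zero : e 0 = u := rfl
  have he_last : e (Fin.last _) = v := by simp [e]
  have he_succ : ∀ i, e i.castSucc.succ = s i := by simp [e]
  have he : StrictMono e := by
    refine Fin.strictMono_cons.2 ⟨fun j => ?_, Fin.strictMono_iff_lt_succ.2 fun j => ?_⟩
    · induction j using Fin.lastCases with
      | last => simpa using (hs_mem 0).1.trans (hs_mem 0).2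
      | cast i => simpa using (hs_mem i).1
    · induction j using Fin.lastCases with
      | last => simpa using hsv _
      | cast i =>
        rw [Fin.succ_castSucc, Fin.snoc_castSucc, Fin.snoc_castSucc]
        exact hs.1 Fin.castSucc_lt_succ
  have hsign : ∀ j : Fin (n + 3), 0 < (-1) ^ (n + (j : ℕ)) * w.eval (e j) := by
    intro j
    induction j using Fin.cases with
    | zero => simpa [he_zero] using hwu
    | succ k =>
      induction k using Fin.lastCases with
      | last =>
        rw [Fin.succ_last, he_last, Fin.val_last, Even.neg_one_pow ⟨n + 1, by omega⟩, one_mul]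
        exact hwv
      | cast i =>
        -- exactly `i` roots of `p` lie below `s i`, and `w` has the sign opposite to `p` there
        have hpi := hr.neg_one_pow_add_card_mul_eval_pos hp hrv hpv (hps i)
        rw [hrs.card_filter_lt hs.1] at hpi
        have hwp := hopp _ (hsv i) ((hs.2 _).2 ⟨i, rfl⟩) (hps i)
        simp only [Fin.val_succ, Fin.val_castSucc, he_succ, ← add_assoc, pow_succ]
        nlinarith [mul_pos hpi (neg_pos.2 hwp), mul_self_pos.2 (hps i)]
  obtain ⟨t, ht, hte⟩ := exists_isSortedRoots_of_alternating (by rintro rfl; simp at hwv) hw he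
    fun j => mul_neg_of_neg_one_pow_mul_pos (hsign j.castSucc) (hsign j.succ)
  refine ⟨t, ht, fun j => ⟨?_, ?_⟩, fun i => ⟨?_, ?_⟩⟩
  · exact he_zero ▸ (he.monotone (Fin.zero_le _)).trans_lt (hte j).1
  · exact he_last ▸ (hte j).2.trans_le (he.monotone (Fin.le_last _))
  · exact he_succ i ▸ (hte i.castSucc).2
  · exact he_succ i ▸ Fin.succ_castSucc i ▸ (hte i.succ).1

end Interlaces

theorem exists_isSortedRoots_interlaces_of_opposite_signs {W : ℕ → ℝ[X]} {u v : ℝ}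
    (hu0 : u < 0) (hv0 : 0 < v) (h0 : W 0 = 1) (h1 : W 1 = X) (hdeg : ∀ n, (W n).natDegree ≤ n)
    (hu : ∀ n, 0 < (-1) ^ n * (W n).eval u) (hv : ∀ n, 0 < (W n).eval v)
    (hopp : ∀ n x, x < v → (W (n + 1)).IsRoot x → ¬ (W n).IsRoot x →
      (W (n + 2)).eval x * (W n).eval x < 0) :
    ∃ r : (n : ℕ) → Fin n → ℝ, (∀ n, IsSortedRoots (W n) (r n)) ∧
      (∀ n i, r n i ∈ Set.Ioo u v) ∧ ∀ n, Interlaces (r n) (r (n + 1)) := by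
  have hpair : ∀ n, ∃ (r : Fin n → ℝ) (s : Fin (n + 1) → ℝ), IsSortedRoots (W n) r ∧
      IsSortedRoots (W (n + 1)) s ∧ (∀ i, s i ∈ Set.Ioo u v) ∧ Interlaces r s := by
    intro n
    induction n with
    | zero =>
      refine ⟨Fin.elim0, fun _ => 0, ⟨Subsingleton.strictMono _, by simp [h0]⟩,
        ⟨Subsingleton.strictMono (α := Fin 1) _, by simp [h1, eq_comm]⟩, fun _ => ⟨hu0, hv0⟩,
        fun i => i.elim0⟩
    | succ n ih =>
      obtain ⟨r, s, hr, hs, hs_mem, hrs⟩ := ih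
      obtain ⟨t, ht, ht_mem, hst⟩ := hrs.exists_isSortedRoots_of_opposite_signs (hdeg n)
        (hdeg (n + 2)) hr hs hs_mem (hv n) (by simpa [pow_add] using hu (n + 2)) (hv (n + 2))
        (hopp n)
      exact ⟨s, t, hs, ht, ht_mem, hst⟩
  choose r s hr hs hs_mem hrs using hpair
  -- the roots of `W (n + 1)` are listed in increasing order by both `s n` and `r (n + 1)`
  have hsr : ∀ n, s n = r (n + 1) := fun n => ((hs n).1.range_inj (hr (n + 1)).1).1 <|
    Set.ext fun x => ((hs n).2 x).symm.trans ((hr (n + 1)).2 x)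
  refine ⟨r, hr, fun n i => ?_, fun n => hsr n ▸ hrs n⟩
  cases n with
  | zero => exact i.elim0
  | succ n => exact hsr n ▸ hs_mem n i

section ThreeTerm

variable {R : Type*} [CommRing R] {a b c d : R} {W : ℕ → R[X]}

theorem natDegree_le_of_three_term (h0 : W 0 = 1) (h1 : W 1 = X)
    (hrec : ∀ n, W (n + 2) = (C a * X + C b) * W (n + 1) + (C c * X + C d) * W n) (n : ℕ) :
    (W n).natDegree ≤ n := by
  induction n using Nat.twoStepInduction with
  | zero => simp [h0]
  | one => simpa [h1] using natDegree_X_le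
  | more n ih ih' =>
    rw [hrec]
    exact natDegree_add_le_of_degree_le
      ((natDegree_mul_le_of_le natDegree_linear_le ih').trans (by omega))
      ((natDegree_mul_le_of_le natDegree_linear_le ih).trans (by omega))

end ThreeTerm

section RealThreeTerm

variable {a b c d : ℝ} {W : ℕ → ℝ[X]}

theorem eval_pos_of_three_term (h0 : W 0 = 1) (h1 : W 1 = X)
    (hrec : ∀ n, W (n + 2) = (C a * X + C b) * W (n + 1) + (C c * X + C d) * W n) {x : ℝ}
    (hx : 0 < x) (hA : 0 < a * x + b) (hB : 0 ≤ c * x + d) (n : ℕ) : 0 < (W n).eval x := by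
  induction n using Nat.twoStepInduction with
  | zero => simp [h0]
  | one => simpa [h1]
  | more n ih ih' =>
    simpa [hrec] using add_pos_of_pos_of_nonneg (mul_pos hA ih') (mul_nonneg hB ih.le)

theorem pos_of_two_step_recurrence {P : ℕ → ℝ} {α β : ℝ} (hα : 0 < α) (hβ : 0 < β)
    (hdisc : 4 * β ≤ α ^ 2) (h0 : 0 < P 0) (h1 : 2 * β * P 0 ≤ α * P 1)
    (hrec : ∀ n, P (n + 2) = α * P (n + 1) - β * P n) (n : ℕ) : 0 < P n := by
  -- `P (n + 1) ≥ λ P n` propagates for `λ = 2β/α`, a point where `λ² - αλ + β ≤ 0`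
  have key : ∀ n, 0 < P n ∧ 2 * β * P n ≤ α * P (n + 1) := by
    intro n
    induction n with
    | zero => exact ⟨h0, h1⟩
    | succ n ih =>
      obtain ⟨hpos, hratio⟩ := ih
      have hpos' : 0 < P (n + 1) := by nlinarith
      refine ⟨hpos', ?_⟩
      rw [hrec]
      nlinarith
  exact (key n).1

theorem exists_neg_one_pow_mul_eval_pos_of_three_term (ha : 0 < a) (hc : 0 < c) (hb : b < 0)
    (hd : d < 0) (h0 : W 0 = 1) (h1 : W 1 = X)
    (hrec : ∀ n, W (n + 2) = (C a * X + C b) * W (n + 1) + (C c * X + C d) * W n) :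
    ∃ u < 0, ∀ n, 0 < (-1) ^ n * (W n).eval u := by
  -- `(-1)ⁿ Wₙ(-M)` satisfies `Pₙ₊₂ = (aM - b) Pₙ₊₁ - (cM - d) Pₙ`, and `M` is taken large enough
  -- for `pos_of_two_step_recurrence`
  set K := c - d
  set M := max 1 (max (2 * K / a) (4 * K / a ^ 2))
  have hM1 : 1 ≤ M := le_max_left _ _
  have hM2 : 2 * K ≤ a * M := by
    rw [← div_le_iff₀' ha]; exact (le_max_left _ _).trans (le_max_right _ _)
  have hM4 : 4 * K ≤ a ^ 2 * M := by
    rw [← div_le_iff₀' (by positivity)]; exact (le_max_right _ _).trans (le_max_right _ _)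
  refine ⟨-M, by linarith, pos_of_two_step_recurrence (α := a * M - b) (β := c * M - d)
    (by nlinarith) (by nlinarith) ?_ (by simp [h0]) ?_ fun n => ?_⟩
  · nlinarith
  · simp [h0, h1]; nlinarith
  · simp only [hrec, eval_add, eval_mul, eval_C, eval_X]; ring

theorem eval_mul_eval_neg_of_three_term (hc : 0 < c)
    (hrec : ∀ n, W (n + 2) = (C a * X + C b) * W (n + 1) + (C c * X + C d) * W n) {n : ℕ}
    {x : ℝ} (hx : x < -d / c) (hroot : (W (n + 1)).IsRoot x) (hnot : ¬ (W n).IsRoot x) :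
    (W (n + 2)).eval x * (W n).eval x < 0 := by
  have hB : c * x + d < 0 := by linarith [(lt_div_iff₀ hc).1 hx]
  have hval : (W (n + 2)).eval x = (c * x + d) * (W n).eval x := by
    simp [hrec, hroot.eq_zero]
  rw [hval, mul_assoc]
  exact mul_neg_of_neg_of_pos hB (mul_self_pos.2 hnot)

end RealThreeTerm

open Polynomial in
theorem stmt_19 (a b c d : ℝ) (ha : 0 < a) (hc : 0 < c) (hb : b < 0) (hd : d < 0)
    (hAB : -b / a < -d / c)
    (W : ℕ → Polynomial ℝ) (h0 : W 0 = 1) (h1 : W 1 = X)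
    (hrec : ∀ n, W (n + 2) = (C a * X + C b) * W (n + 1) + (C c * X + C d) * W n) :
    ∃ u v : ℝ, u < 0 ∧ 0 < v ∧
      ∃ r : (n : ℕ) → Fin n → ℝ,
        (∀ n, StrictMono (r n)) ∧
        (∀ n i, u < r n i ∧ r n i < v) ∧
        (∀ n (x : ℝ), (W n).IsRoot x ↔ ∃ i, r n i = x) ∧
        (∀ n (i : Fin n), r (n + 1) i.castSucc < r n i ∧ r n i < r (n + 1) i.succ) := by
  obtain ⟨u, hu0, hu⟩ := exists_neg_one_pow_mul_eval_pos_of_three_term ha hc hb hd h0 h1 hrec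
  have hv0 : 0 < -d / c := div_pos (neg_pos.2 hd) hc
  have hA : 0 < a * (-d / c) + b := by linarith [(div_lt_iff₀ ha).1 hAB]
  have hB : c * (-d / c) + d = 0 := by field_simp; ring
  obtain ⟨r, hr, hmem, hint⟩ := exists_isSortedRoots_interlaces_of_opposite_signs hu0 hv0 h0 h1
    (natDegree_le_of_three_term h0 h1 hrec) hu (eval_pos_of_three_term h0 h1 hrec hv0 hA hB.ge)
    fun n x => eval_mul_eval_neg_of_three_term hc hrec
  exact ⟨u, -d / c, hu0, hv0, r, fun n => (hr n).1, hmem, fun n => (hr n).2, hint⟩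
end
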